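/- As x → ∞, κ(x) converges in the extended reals to ∫_{[0,1]} p^{−1} Λ(dp) ∈ (0,∞], where the integrand is +∞ at p = 0. In particular κ(x) → ∞ as x → ∞ if and only if ∫_{[0,1]} p^{−1} Λ(dp) = ∞ (i.e. the Λ-coalescent has no dust component). -/

import Mathlib

open MeasureTheory Real Set Filter Topology

/-- The integrand of `mu`, with its continuous extension `x(x-1)/2` at `p = 0`. -/
noncomputable def muInt (x p : ℝ) : ℝ :=
  if p = 0 then x * (x - 1) / 2
  else (x * p - 1 + (1 - p) ^ x) / p ^ 2

/-- The rate of decrease `μ(x)` of the `Λ`-coalescent. -/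
noncomputable def mu (Λ : Measure ℝ) (x : ℝ) : ℝ :=
  ∫ p in Set.Icc (0:ℝ) 1, muInt x p ∂Λ

/-- The rate of decrease per capita `κ(x) = μ(x)/x`. -/
noncomputable def kappa (Λ : Measure ℝ) (x : ℝ) : ℝ := mu Λ x / x

/-- `∫_{[0,1]} p⁻¹ Λ(dp)` as an extended real number, where the integrand is `+∞` at `p = 0`. -/
noncomputable def dustIntegral (Λ : Measure ℝ) : ENNReal :=
  ∫⁻ p in Set.Icc (0:ℝ) 1, (ENNReal.ofReal p)⁻¹ ∂Λ

/-!
For `p > 0` the integrand `muInt x p / x` of `κ(x)` equals `(p - (1 - (1-p)^x)/x)/p²`. Convexity of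
`t ↦ (1-p)^t` makes `(1 - (1-p)^x)/x` decrease to `0`, so the integrand increases to `1/p` (and to
`∞` at `p = 0`, where it is `(x-1)/2`). Monotone convergence gives `κ(x) ↑ ∫ p⁻¹ Λ(dp)`, which is at
least `Λ([0,1]) > 0` because `p⁻¹ ≥ 1` on `[0,1]`.
-/

theorem Real.exp_neg_le_one_sub_add_sq_div_two {t : ℝ} (ht : 0 ≤ t) :
    exp (-t) ≤ 1 - t + t ^ 2 / 2 := by
  have hderiv : ∀ s : ℝ, HasDerivAt (fun s => 1 - s + s ^ 2 / 2 - exp (-s))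
      (-1 + s + exp (-s)) s := fun s =>
    ((((hasDerivAt_const s 1).sub (hasDerivAt_id s)).add
      ((hasDerivAt_pow 2 s).div_const 2)).sub (hasDerivAt_neg s).exp).congr_deriv (by simp)
  have hmono : Monotone (fun s => 1 - s + s ^ 2 / 2 - exp (-s)) :=
    monotone_of_deriv_nonneg (fun s => (hderiv s).differentiableAt) fun s => by
      rw [(hderiv s).deriv]; linarith [one_sub_le_exp_neg s]
  simpa using hmono ht

theorem Real.one_sub_rpow_div_le_of_le {q x y : ℝ} (hq : 0 ≤ q) (hx : 0 < x) (hxy : x ≤ y) :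
    (1 - q ^ y) / y ≤ (1 - q ^ x) / x := by
  have hy : 0 < y := hx.trans_le hxy
  rcases hq.eq_or_lt with rfl | hq
  · simpa [zero_rpow hx.ne', zero_rpow hy.ne'] using one_div_le_one_div_of_le hx hxy
  · have hsecant := (convexOn_rpow_left hq).secant_mono (mem_univ 0) (mem_univ x) (mem_univ y)
      hx.ne' hy.ne' hxy
    rw [rpow_zero, sub_zero, sub_zero] at hsecant
    rw [← neg_sub (q ^ y), ← neg_sub (q ^ x), neg_div, neg_div]
    exact neg_le_neg hsecant

theorem muInt_zero (x : ℝ) : muInt x 0 = x * (x - 1) / 2 := if_pos rfl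

theorem muInt_of_ne_zero (x : ℝ) {p : ℝ} (hp : p ≠ 0) :
    muInt x p = (x * p - 1 + (1 - p) ^ x) / p ^ 2 := if_neg hp

theorem muInt_zero_div {x : ℝ} (hx : x ≠ 0) : muInt x 0 / x = (x - 1) / 2 := by
  rw [muInt_zero]
  field_simp

theorem measurable_muInt (x : ℝ) : Measurable (muInt x) :=
  Measurable.ite (measurableSet_singleton 0) measurable_const (by fun_prop)

theorem muInt_nonneg {x p : ℝ} (hx : 1 ≤ x) (hp : p ∈ Icc (0:ℝ) 1) : 0 ≤ muInt x p := by
  rcases eq_or_ne p 0 with rfl | hp0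
  · rw [muInt_zero]; nlinarith
  · rw [muInt_of_ne_zero x hp0]
    have bernoulli : 1 + x * -p ≤ (1 + -p) ^ x :=
      one_add_mul_self_le_rpow_one_add (by linarith [hp.2]) hx
    rw [← sub_eq_add_neg] at bernoulli
    exact div_nonneg (by linarith) (sq_nonneg p)

theorem muInt_le_sq_div_two {x p : ℝ} (hx : 1 ≤ x) (hp : p ∈ Icc (0:ℝ) 1) :
    muInt x p ≤ x ^ 2 / 2 := by
  rcases eq_or_ne p 0 with rfl | hp0
  · rw [muInt_zero]; nlinarith
  · rw [muInt_of_ne_zero x hp0, div_le_iff₀ (by positivity)]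
    have hexp : (1 - p) ^ x ≤ exp (-(x * p)) := calc
      (1 - p) ^ x ≤ exp (-p) ^ x :=
        rpow_le_rpow (by linarith [hp.2]) (one_sub_le_exp_neg p) (by linarith)
      _ = exp (-(x * p)) := by rw [← exp_mul]; ring_nf
    nlinarith [exp_neg_le_one_sub_add_sq_div_two (mul_nonneg (zero_le_one.trans hx) hp.1)]

theorem muInt_div_eq {x p : ℝ} (hx : x ≠ 0) (hp : p ≠ 0) :
    muInt x p / x = (p - (1 - (1 - p) ^ x) / x) / p ^ 2 := by
  rw [muInt_of_ne_zero x hp]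
  field_simp
  ring

theorem monotoneOn_muInt_div {p : ℝ} (hp : p ∈ Icc (0:ℝ) 1) :
    MonotoneOn (fun x => muInt x p / x) (Ioi 0) := by
  intro x (hx : 0 < x) y (hy : 0 < y) hxy
  dsimp only
  rcases eq_or_ne p 0 with rfl | hp0
  · rw [muInt_zero_div hx.ne', muInt_zero_div hy.ne']
    linarith
  · rw [muInt_div_eq hx.ne' hp0, muInt_div_eq hy.ne' hp0]
    refine div_le_div_of_nonneg_right (sub_le_sub_left ?_ p) (sq_nonneg p)
    exact one_sub_rpow_div_le_of_le (by linarith [hp.2]) hx hxy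

theorem tendsto_muInt_div {p : ℝ} (hp : p ∈ Ioc (0:ℝ) 1) :
    Tendsto (fun x => muInt x p / x) atTop (𝓝 p⁻¹) := by
  have hq : 0 ≤ 1 - p := by linarith [hp.2]
  have hsmall : Tendsto (fun x : ℝ => (1 - (1 - p) ^ x) / x) atTop (𝓝 0) := by
    refine squeeze_zero' ?_ ?_ tendsto_inv_atTop_zero
    all_goals filter_upwards [eventually_gt_atTop 0] with x hx
    · exact div_nonneg (by linarith [rpow_le_one hq (by linarith [hp.1]) hx.le]) hx.le
    · rw [div_le_iff₀ hx, inv_mul_cancel₀ hx.ne']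
      linarith [rpow_nonneg hq x]
  have hlim := (tendsto_const_nhds (x := p)).sub hsmall |>.div_const (p ^ 2)
  have hval : (p - 0) / p ^ 2 = p⁻¹ := by rw [sub_zero, sq, div_mul_cancel_left₀ hp.1.ne']
  rw [hval] at hlim
  refine hlim.congr' ?_
  filter_upwards [eventually_gt_atTop 0] with x hx
  exact (muInt_div_eq hx.ne' hp.1.ne').symm

theorem tendsto_ofReal_muInt_div {p : ℝ} (hp : p ∈ Icc (0:ℝ) 1) :
    Tendsto (fun x => ENNReal.ofReal (muInt x p / x)) atTop (𝓝 (ENNReal.ofReal p)⁻¹) := by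
  rcases hp.1.eq_or_lt with rfl | hp0
  · rw [ENNReal.ofReal_zero, ENNReal.inv_zero, ENNReal.tendsto_ofReal_nhds_top]
    refine (tendsto_atTop_add_const_right atTop (-1) tendsto_id
      |>.atTop_div_const two_pos).congr' ?_
    filter_upwards [eventually_gt_atTop 0] with x hx
    rw [muInt_zero_div hx.ne', id, ← sub_eq_add_neg]
  · rw [← ENNReal.ofReal_inv_of_pos hp0]
    exact ENNReal.tendsto_ofReal (tendsto_muInt_div ⟨hp0, hp.2⟩)

theorem MeasureTheory.lintegral_tendsto_of_tendsto_of_monotoneOn {α : Type*} [MeasurableSpace α]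
    {μ : Measure α} {f : ℝ → α → ENNReal} {F : α → ENNReal} {c : ℝ}
    (hf : ∀ x, AEMeasurable (f x) μ) (h_mono : ∀ᵐ a ∂μ, MonotoneOn (fun x => f x a) (Ici c))
    (h_tendsto : ∀ᵐ a ∂μ, Tendsto (fun x => f x a) atTop (𝓝 (F a))) :
    Tendsto (fun x => ∫⁻ a, f x a ∂μ) atTop (𝓝 (∫⁻ a, F a ∂μ)) := by
  have hmax : Monotone (fun x : ℝ => max c x) := fun _ _ h => max_le_max le_rfl h
  have hmax_tendsto : Tendsto (fun x : ℝ => max c x) atTop atTop :=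
    tendsto_atTop_mono (le_max_right c) tendsto_id
  have hI : Monotone (fun x => ∫⁻ a, f (max c x) a ∂μ) := fun x y hxy =>
    lintegral_mono_ae <| h_mono.mono fun a ha =>
      ha (le_max_left c x) (le_max_left c y) (hmax hxy)
  have hseq : Tendsto (fun n : ℕ => ∫⁻ a, f (max c n) a ∂μ) atTop (𝓝 (∫⁻ a, F a ∂μ)) :=
    lintegral_tendsto_of_tendsto_of_monotone (fun _ => hf _)
      (h_mono.mono fun a ha m n hmn =>
        ha (le_max_left c (m : ℝ)) (le_max_left c (n : ℝ)) (hmax (Nat.cast_le.2 hmn)))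
      (h_tendsto.mono fun a ha => ha.comp (hmax_tendsto.comp tendsto_natCast_atTop_atTop))
  have hsup := tendsto_nhds_unique ((tendsto_atTop_iSup hI).comp tendsto_natCast_atTop_atTop) hseq
  refine (hsup ▸ tendsto_atTop_iSup hI).congr' ?_
  filter_upwards [eventually_ge_atTop c] with x hx
  rw [max_eq_right hx]

section Coalescent

variable (Λ : Measure ℝ)

theorem ofReal_kappa_eq_lintegral [IsFiniteMeasure Λ] {x : ℝ} (hx : 1 ≤ x) :
    ENNReal.ofReal (kappa Λ x) = ∫⁻ p in Icc (0:ℝ) 1, ENNReal.ofReal (muInt x p / x) ∂Λ := by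
  have hint : IntegrableOn (muInt x) (Icc 0 1) Λ := by
    refine Integrable.mono' (integrable_const (x ^ 2 / 2))
      (measurable_muInt x).aestronglyMeasurable ?_
    filter_upwards [ae_restrict_mem measurableSet_Icc] with p hp
    rw [norm_of_nonneg (muInt_nonneg hx hp)]
    exact muInt_le_sq_div_two hx hp
  rw [kappa, mu, ← integral_div]
  refine ofReal_integral_eq_lintegral_ofReal (hint.div_const x) ?_
  filter_upwards [ae_restrict_mem measurableSet_Icc] with p hp
  exact div_nonneg (muInt_nonneg hx hp) (zero_le_one.trans hx)

theorem tendsto_ofReal_kappa [IsFiniteMeasure Λ] :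
    Tendsto (fun x => ENNReal.ofReal (kappa Λ x)) atTop (𝓝 (dustIntegral Λ)) := by
  have hlim := lintegral_tendsto_of_tendsto_of_monotoneOn (c := 1)
    (μ := Λ.restrict (Icc 0 1)) (F := fun p => (ENNReal.ofReal p)⁻¹)
    (fun x => ((measurable_muInt x).div_const x).ennreal_ofReal.aemeasurable)
    (by
      filter_upwards [ae_restrict_mem measurableSet_Icc] with p hp
      exact ENNReal.ofReal_mono.comp_monotoneOn
        (monotoneOn_muInt_div hp |>.mono (Ici_subset_Ioi.2 one_pos)))
    (by
      filter_upwards [ae_restrict_mem measurableSet_Icc] with p hp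
      exact tendsto_ofReal_muInt_div hp)
  refine hlim.congr' ?_
  filter_upwards [eventually_ge_atTop 1] with x hx
  exact (ofReal_kappa_eq_lintegral Λ hx).symm

theorem measure_Icc_le_dustIntegral : Λ (Icc 0 1) ≤ dustIntegral Λ := by
  rw [← setLIntegral_one]
  refine setLIntegral_mono' measurableSet_Icc fun p hp => ?_
  exact ENNReal.one_le_inv.2 (ENNReal.ofReal_le_one.2 hp.2)

theorem dustIntegral_pos (hΛ : Λ ≠ 0) (hsupp : Λ (Icc (0:ℝ) 1)ᶜ = 0) : 0 < dustIntegral Λ := by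
  refine lt_of_lt_of_le (pos_iff_ne_zero.2 fun h => hΛ ?_) (measure_Icc_le_dustIntegral Λ)
  rw [← Measure.measure_univ_eq_zero, ← union_compl_self (Icc (0:ℝ) 1)]
  exact measure_union_null h hsupp

end Coalescent

/-- As `x → ∞`, `κ(x)` converges in the extended reals to `∫_{[0,1]} p⁻¹ Λ(dp) ∈ (0,∞]`.
In particular `κ(x) → ∞` iff `∫_{[0,1]} p⁻¹ Λ(dp) = ∞` (no dust component). -/
theorem kappa_tendsto_dustIntegral (Λ : Measure ℝ) [IsFiniteMeasure Λ] (hΛ : Λ ≠ 0)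
    (hsupp : Λ (Set.Icc (0:ℝ) 1)ᶜ = 0) :
    Tendsto (fun x => ENNReal.ofReal (kappa Λ x)) atTop (𝓝 (dustIntegral Λ)) ∧
    0 < dustIntegral Λ ∧
    (Tendsto (kappa Λ) atTop atTop ↔ dustIntegral Λ = ⊤) := by
  have hlim := tendsto_ofReal_kappa Λ
  refine ⟨hlim, dustIntegral_pos Λ hΛ hsupp, ?_⟩
  rw [← ENNReal.tendsto_ofReal_nhds_top]
  exact ⟨fun h => tendsto_nhds_unique hlim h, fun h => h ▸ hlim⟩
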